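/- For every y ∈ ℝ³ and every η ∈ ℝ³ with η ≠ 0, the Hessian of q satisfies the lower bound ηᵀ∇²q(y)η > (δ/2) · (1+|y|²)^{−(1+δ)/2} · |η|². -/

import Mathlib

open Real

/-- `h(r) = r^{1/2} - r^{(1-δ)/2}/(2(1-δ))`. -/
noncomputable def h (δ : ℝ) (r : ℝ) : ℝ :=
  r ^ (1/2 : ℝ) - r ^ ((1 - δ)/2) / (2 * (1 - δ))

/-- `q(y) = h(1 + |y|²)` on `ℝ³`. -/
noncomputable def q (δ : ℝ) (y : EuclideanSpace ℝ (Fin 3)) : ℝ :=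
  h δ (1 + ‖y‖ ^ 2)

/-- first derivative of `h` -/
noncomputable def h1 (δ : ℝ) (r : ℝ) : ℝ :=
  (1/2) * r ^ (-(1:ℝ)/2) - (1/4) * r ^ (-(1+δ)/2)

/-- second derivative of `h` -/
noncomputable def h2 (δ : ℝ) (r : ℝ) : ℝ :=
  -(1/4) * r ^ (-(3:ℝ)/2) + ((1+δ)/8) * r ^ (-(3+δ)/2)

/-- the inner product as a plain ℝ-bilinear continuous map -/
noncomputable def B : EuclideanSpace ℝ (Fin 3) →L[ℝ] EuclideanSpace ℝ (Fin 3) →L[ℝ] ℝ :=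
  innerSL ℝ

@[simp] lemma B_apply (x y : EuclideanSpace ℝ (Fin 3)) : B x y = inner ℝ x y := rfl

lemma h_hasDerivAt (δ : ℝ) (hδ1 : δ < 1) {r : ℝ} (hr : 0 < r) :
    HasDerivAt (h δ) (h1 δ r) r := by
  have hA : HasDerivAt (fun s : ℝ => s ^ (1/2:ℝ)) ((1/2) * r ^ ((1/2:ℝ)-1)) r :=
    Real.hasDerivAt_rpow_const (Or.inl hr.ne')
  have hB : HasDerivAt (fun s : ℝ => s ^ ((1-δ)/2)) (((1-δ)/2) * r ^ ((1-δ)/2-1)) r :=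
    Real.hasDerivAt_rpow_const (Or.inl hr.ne')
  have := hA.sub (hB.div_const (2*(1-δ)))
  have h1δ : (1:ℝ) - δ ≠ 0 := by linarith
  refine this.congr_deriv (Eq.symm ?_)
  rw [show (1/2:ℝ)-1 = -(1:ℝ)/2 by ring, show (1-δ)/2-1 = -(1+δ)/2 by ring]
  unfold h1
  field_simp
  ring

lemma h1_hasDerivAt (δ : ℝ) {r : ℝ} (hr : 0 < r) :
    HasDerivAt (h1 δ) (h2 δ r) r := by
  have hA : HasDerivAt (fun s : ℝ => s ^ (-(1:ℝ)/2)) ((-(1:ℝ)/2) * r ^ ((-(1:ℝ)/2)-1)) r :=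
    Real.hasDerivAt_rpow_const (Or.inl hr.ne')
  have hB : HasDerivAt (fun s : ℝ => s ^ (-(1+δ)/2)) ((-(1+δ)/2) * r ^ ((-(1+δ)/2)-1)) r :=
    Real.hasDerivAt_rpow_const (Or.inl hr.ne')
  have := (hA.const_mul (1/2:ℝ)).sub (hB.const_mul (1/4:ℝ))
  refine this.congr_deriv (Eq.symm ?_)
  rw [show (-(1:ℝ)/2)-1 = -(3:ℝ)/2 by ring, show (-(1+δ)/2)-1 = -(3+δ)/2 by ring]
  unfold h2
  ring

lemma g_hasFDerivAt (y : EuclideanSpace ℝ (Fin 3)) :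
    HasFDerivAt (fun y : EuclideanSpace ℝ (Fin 3) => 1 + ‖y‖^2)
      ((2:ℝ) • (innerSL ℝ y)) y := by
  have h0 := ((hasFDerivAt_id y).inner ℝ (hasFDerivAt_id y)).const_add 1
  have heq : (fun y : EuclideanSpace ℝ (Fin 3) => 1 + ‖y‖^2)
      = fun y : EuclideanSpace ℝ (Fin 3) => 1 + (inner ℝ y y : ℝ) := by
    funext z; rw [real_inner_self_eq_norm_sq]
  rw [heq]
  refine h0.congr_fderiv (Eq.symm ?_)
  ext ξ
  simp only [ContinuousLinearMap.smul_apply, innerSL_apply_apply, ContinuousLinearMap.coe_comp',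
    Function.comp_apply, ContinuousLinearMap.prod_apply, ContinuousLinearMap.coe_id', id_eq,
    fderivInnerCLM_apply, smul_eq_mul]
  rw [real_inner_comm ξ y]
  ring

lemma q_hasFDerivAt (δ : ℝ) (hδ1 : δ < 1) (y : EuclideanSpace ℝ (Fin 3)) :
    HasFDerivAt (q δ) ((2 * h1 δ (1 + ‖y‖^2)) • innerSL ℝ y) y := by
  have hr : (0:ℝ) < 1 + ‖y‖^2 := by positivity
  have := (h_hasDerivAt δ hδ1 hr).comp_hasFDerivAt y (g_hasFDerivAt y)
  refine this.congr_fderiv (Eq.symm ?_)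
  rw [smul_smul, mul_comm]

lemma fderiv_q_eq (δ : ℝ) (hδ1 : δ < 1) :
    fderiv ℝ (q δ)
      = fun y : EuclideanSpace ℝ (Fin 3) => (2 * h1 δ (1 + ‖y‖^2)) • innerSL ℝ y :=
  funext fun y => (q_hasFDerivAt δ hδ1 y).fderiv

lemma c_hasFDerivAt (δ : ℝ) (y : EuclideanSpace ℝ (Fin 3)) :
    HasFDerivAt (fun y : EuclideanSpace ℝ (Fin 3) => 2 * h1 δ (1 + ‖y‖^2))
      ((4 * h2 δ (1 + ‖y‖^2)) • innerSL ℝ y) y := by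
  have hr : (0:ℝ) < 1 + ‖y‖^2 := by positivity
  have := ((h1_hasDerivAt δ hr).comp_hasFDerivAt y (g_hasFDerivAt y)).const_mul (2:ℝ)
  refine this.congr_fderiv (Eq.symm ?_)
  rw [smul_smul, smul_smul]
  ring_nf

/-- The Hessian lower bound `ηᵀ∇²q(y)η > (δ/2)(1+|y|²)^{−(1+δ)/2}|η|²` for `η ≠ 0`. -/
theorem stmt_7 (δ : ℝ) (hδ : δ ∈ Set.Ioc (0:ℝ) (1/2))
    (y η : EuclideanSpace ℝ (Fin 3)) (hη : η ≠ 0) :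
    δ/2 * (1 + ‖y‖ ^ 2) ^ (-(1 + δ)/2) * ‖η‖ ^ 2
      < fderiv ℝ (fderiv ℝ (q δ)) y η η := by
  obtain ⟨hδ0, hδhalf⟩ := hδ
  have hδ1 : δ < 1 := by linarith
  set r : ℝ := 1 + ‖y‖^2 with hr_def
  have hr0 : (0:ℝ) < r := by positivity
  have hr1 : (1:ℝ) ≤ r := by nlinarith [sq_nonneg ‖y‖]
  -- compute the second derivative
  have hF : HasFDerivAt
      (fun y : EuclideanSpace ℝ (Fin 3) => (2 * h1 δ (1 + ‖y‖^2)) • innerSL ℝ y)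
      ((2 * h1 δ r) • B + ((4 * h2 δ r) • innerSL ℝ y).smulRight (innerSL ℝ y)) y :=
    (c_hasFDerivAt δ y).smul B.hasFDerivAt
  have hval : fderiv ℝ (fderiv ℝ (q δ)) y η η
      = 2 * h1 δ r * ‖η‖^2 + 4 * h2 δ r * (inner ℝ y η : ℝ)^2 := by
    rw [fderiv_q_eq δ hδ1, hF.fderiv]
    simp only [ContinuousLinearMap.add_apply, ContinuousLinearMap.smul_apply,
      ContinuousLinearMap.smulRight_apply, B_apply, innerSL_apply_apply, smul_eq_mul,
      real_inner_self_eq_norm_sq]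
    ring
  rw [hval]
  -- key algebraic identity
  have e1 : r * r ^ (-(3:ℝ)/2) = r ^ (-(1:ℝ)/2) := by
    rw [show (-(1:ℝ)/2) = 1 + (-(3:ℝ)/2) by norm_num, Real.rpow_add hr0, Real.rpow_one]
  have e2 : r * r ^ (-(3+δ)/2) = r ^ (-(1+δ)/2) := by
    rw [show (-(1+δ)/2) = 1 + (-(3+δ)/2) by ring, Real.rpow_add hr0, Real.rpow_one]
  have key : 4 * r * h2 δ r + 2 * h1 δ r = δ/2 * r ^ (-(1+δ)/2) := by
    unfold h1 h2
    nlinarith [e1, e2]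
  -- h2 is negative
  have hA : r ^ (-(3+δ)/2) ≤ r ^ (-(3:ℝ)/2) :=
    Real.rpow_le_rpow_of_exponent_le hr1 (by linarith)
  have hB : (0:ℝ) < r ^ (-(3:ℝ)/2) := Real.rpow_pos_of_pos hr0 _
  have h2neg : h2 δ r < 0 := by
    unfold h2
    nlinarith [hA, hB]
  have hE : (0:ℝ) < ‖η‖^2 := by
    have := norm_pos_iff.mpr hη
    positivity
  have hs : (inner ℝ y η : ℝ)^2 ≤ (r - 1) * ‖η‖^2 := by
    have h1' := abs_real_inner_le_norm y η
    have := sq_le_sq' (neg_le_of_abs_le h1') (le_of_abs_le h1')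
    calc (inner ℝ y η : ℝ)^2 ≤ (‖y‖ * ‖η‖)^2 := this
      _ = (r - 1) * ‖η‖^2 := by rw [hr_def]; ring
  have hpos : 0 < r * ‖η‖^2 - (inner ℝ y η : ℝ)^2 := by nlinarith
  have hneg : h2 δ r * (r * ‖η‖^2 - (inner ℝ y η : ℝ)^2) < 0 :=
    mul_neg_of_neg_of_pos h2neg hpos
  have : δ/2 * r ^ (-(1+δ)/2) * ‖η‖^2 = (4 * r * h2 δ r + 2 * h1 δ r) * ‖η‖^2 := by
    rw [key]
  rw [show (-(1+δ)/2 : ℝ) = -(1+δ)/2 from rfl]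
  calc δ/2 * r ^ (-(1+δ)/2) * ‖η‖^2
      = (4 * r * h2 δ r + 2 * h1 δ r) * ‖η‖^2 := this
    _ < 2 * h1 δ r * ‖η‖^2 + 4 * h2 δ r * (inner ℝ y η : ℝ)^2 := by nlinarith
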